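/- arXiv:1701.01038 — 5 statements merged into one kernel-verified Lean document; each statement's English description precedes it below -/
import Mathlib

section
/- For every integer $n \geq 1$, the group $A = (\mathbb{Z}_3)^n$ satisfies Property D: every sequence $S$ over $A$ of length $|S| = s(A) - 1$ that has no zero-sum subsequence of length $3$ has the form $S = T^{2}$ for some sequence $T$ over $A$. -/
/-!
A sequence with no zero-sum subsequence of length `exp A` has every multiplicity below `exp A`, so
over a finite group such sequences have a maximal length `m`, and `s(A) = m + 1`. When `exp A = 3`,
every element of a longest such sequence `S` occurs exactly twice: if `a` occurred once, the
longer sequence `a S` would contain a zero-sum triple, which must use `a` twice since `S` contains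
none; but `a + a + b = 0` forces `b = a`, i.e. the triple is `a a a`, which `a S` does not contain.
-/

noncomputable def EGZ (A : Type) [AddCommGroup A] : ℕ :=
  sInf {ℓ : ℕ | ∀ S : Multiset A, ℓ ≤ Multiset.card S →
    ∃ T ≤ S, Multiset.card T = AddMonoid.exponent A ∧ T.sum = 0}

def PropertyD (A : Type) [AddCommGroup A] (k : ℕ) : Prop :=
  ∀ S : Multiset A, Multiset.card S = EGZ A - 1 →
    (¬ ∃ T ≤ S, Multiset.card T = k ∧ T.sum = 0) →
    ∃ T : Multiset A, S = (k - 1) • T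

open Multiset

lemma Multiset.le_of_le_cons_of_count_le {α : Type*} [DecidableEq α] {a : α} {S T : Multiset α}
    (h : T ≤ a ::ₘ S) (ha : count a T ≤ count a S) : T ≤ S := by
  rw [le_iff_count] at h ⊢
  intro b
  rcases eq_or_ne b a with rfl | hb
  · exact ha
  · simpa [count_cons_of_ne hb] using h b

lemma AddMonoid.exponent_pi_const {ι M : Type*} [Fintype ι] [Nonempty ι] [AddMonoid M] :
    exponent (ι → M) = exponent M := by
  rw [exponent_pi]
  exact Nat.dvd_antisymm (Finset.lcm_dvd fun _ _ => dvd_rfl)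
    (Finset.dvd_lcm (Finset.mem_univ (Classical.arbitrary ι)))

lemma eq_of_two_nsmul_add_eq_zero {A : Type*} [AddCommGroup A] {a b : A} (h3 : 3 • a = 0)
    (h : 2 • a + b = 0) : b = a := by
  rw [succ_nsmul] at h3
  exact add_left_cancel (h.trans h3.symm)

section ZeroSumFree

variable {A : Type*} [AddCommGroup A]

def ZeroSumFree (k : ℕ) (S : Multiset A) : Prop :=
  ¬ ∃ T ≤ S, card T = k ∧ T.sum = 0

lemma zeroSumFree_zero {k : ℕ} (hk : k ≠ 0) : ZeroSumFree k (0 : Multiset A) := by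
  rintro ⟨T, hT, hTk, -⟩
  rw [le_zero.mp hT, card_zero] at hTk
  exact hk hTk.symm

lemma ZeroSumFree.count_lt [DecidableEq A] {k : ℕ} {S : Multiset A} (hS : ZeroSumFree k S) {a : A}
    (ha : k • a = 0) : count a S < k := by
  by_contra! h
  exact hS ⟨replicate k a, le_count_iff_replicate_le.mp h, card_replicate k a, by
    rw [sum_replicate, ha]⟩

lemma ZeroSumFree.card_le [Fintype A] [DecidableEq A] {k : ℕ} {S : Multiset A}
    (hS : ZeroSumFree k S) (hk : ∀ a : A, k • a = 0) : card S ≤ (k - 1) * Fintype.card A :=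
  calc card S = ∑ a ∈ S.toFinset, count a S := (toFinset_sum_count_eq S).symm
    _ ≤ ∑ _a ∈ S.toFinset, (k - 1) :=
        Finset.sum_le_sum fun a _ => Nat.le_sub_one_of_lt (hS.count_lt (hk a))
    _ = (k - 1) * S.toFinset.card := by rw [Finset.sum_const, smul_eq_mul, mul_comm]
    _ ≤ (k - 1) * Fintype.card A := Nat.mul_le_mul_left _ (Finset.card_le_univ _)

lemma exists_zeroSumFree_forall_card_le [Finite A] :
    ∃ S₀ : Multiset A, ZeroSumFree (AddMonoid.exponent A) S₀ ∧
      ∀ S : Multiset A, ZeroSumFree (AddMonoid.exponent A) S → card S ≤ card S₀ := by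
  classical
  have := Fintype.ofFinite A
  set k := AddMonoid.exponent A
  let lengths : Set ℕ := {ℓ | ∃ S : Multiset A, ZeroSumFree k S ∧ card S = ℓ}
  have hbdd : BddAbove lengths := ⟨(k - 1) * Fintype.card A, by
    rintro _ ⟨S, hS, rfl⟩
    exact hS.card_le AddMonoid.exponent_nsmul_eq_zero⟩
  have hne : lengths.Nonempty :=
    ⟨0, 0, zeroSumFree_zero AddMonoid.exponent_ne_zero_of_finite, rfl⟩
  obtain ⟨S₀, hS₀, hcard⟩ := Nat.sSup_mem hne hbdd
  exact ⟨S₀, hS₀, fun S hS => hcard ▸ le_csSup hbdd ⟨S, hS, rfl⟩⟩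

lemma ZeroSumFree.count_eq_two [DecidableEq A] (h3 : ∀ x : A, 3 • x = 0) {S : Multiset A}
    (hS : ZeroSumFree 3 S) {a : A} (ha : a ∈ S) (hext : ¬ ZeroSumFree 3 (a ::ₘ S)) :
    count a S = 2 := by
  have hle : count a S ≤ 2 := Nat.le_of_lt_succ (hS.count_lt (h3 a))
  by_contra hne
  have hone : count a S = 1 := by
    have := one_le_count_iff_mem.mpr ha
    omega
  obtain ⟨T, hT, hTcard, hTsum⟩ := not_not.mp hext
  have hTa : count a T = 2 := by
    have hTa_le : count a T ≤ 2 := by simpa [hone] using count_le_of_le a hT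
    by_contra hTa
    exact hS ⟨T, le_of_le_cons_of_count_le hT (by omega), hTcard, hTsum⟩
  obtain ⟨U, rfl⟩ := Multiset.le_iff_exists_add.mp (le_count_iff_replicate_le.mp hTa.ge)
  obtain ⟨b, rfl⟩ : ∃ b, U = {b} := card_eq_one.mp (by simpa using hTcard)
  have hb : b = a :=
    eq_of_two_nsmul_add_eq_zero (h3 a) (by simpa [two_nsmul, add_assoc] using hTsum)
  simp [hb] at hTa

end ZeroSumFree

lemma EGZ_eq_card_add_one {A : Type} [AddCommGroup A] {S₀ : Multiset A}
    (hS₀ : ZeroSumFree (AddMonoid.exponent A) S₀)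
    (hmax : ∀ S : Multiset A, ZeroSumFree (AddMonoid.exponent A) S → card S ≤ card S₀) :
    EGZ A = card S₀ + 1 := by
  unfold EGZ
  refine (Nat.sInf_upward_closed_eq_succ_iff ?_ _).mpr ⟨fun S hS => ?_, fun h => hS₀ (h S₀ le_rfl)⟩
  · exact fun _ _ hle h S hS => h S (hle.trans hS)
  · by_contra hfree
    have := hmax S hfree
    omega

theorem propD_three (n : ℕ) (hn : 1 ≤ n) : PropertyD (Fin n → ZMod 3) 3 := by
  classical
  have : Nonempty (Fin n) := ⟨⟨0, hn⟩⟩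
  have hexp : AddMonoid.exponent (Fin n → ZMod 3) = 3 := by
    rw [AddMonoid.exponent_pi_const, ZMod.exponent]
  have h3 (x : Fin n → ZMod 3) : 3 • x = 0 := by
    simpa only [hexp] using AddMonoid.exponent_nsmul_eq_zero x
  obtain ⟨S₀, hS₀, hmax⟩ := exists_zeroSumFree_forall_card_le (A := Fin n → ZMod 3)
  intro S hcard (hS : ZeroSumFree 3 S)
  rw [EGZ_eq_card_add_one hS₀ hmax, Nat.add_sub_cancel] at hcard
  rw [hexp] at hmax
  refine exists_smul_of_dvd_count S fun a ha => ?_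
  have hext : ¬ ZeroSumFree 3 (a ::ₘ S) := fun h => by
    simpa [hcard] using hmax _ h
  rw [hS.count_eq_two h3 ha hext]
end

section
/- Let $n \geq 1$ be an arbitrary integer and let $A = (\mathbb{Z}_3)^n$. Then $s(A) = 2\,g(A) - 1$. -/
/-- The constant `g(A)`: the smallest `ℓ ∈ ℕ` such that every squarefree multiset
(i.e. multiset with no duplicates) over `A` of length `≥ ℓ` has a zero-sum
sub-multiset of length `exp(A)`. -/
noncomputable def gEGZ (A : Type) [AddCommGroup A] : ℕ :=
  sInf {ℓ : ℕ | ∀ S : Multiset A, S.Nodup → ℓ ≤ Multiset.card S →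
    ∃ T ≤ S, Multiset.card T = AddMonoid.exponent A ∧ T.sum = 0}

private lemma three_add_zero {n : ℕ} (x : Fin n → ZMod 3) : x + x + x = 0 := by
  funext i
  have h : ∀ a : ZMod 3, a + a + a = 0 := by decide
  exact h (x i)

private lemma eq_of_double {n : ℕ} {a c : Fin n → ZMod 3} (h : a + a + c = 0) : c = a :=
  add_left_cancel (h.trans (three_add_zero a).symm)

private lemma exp_eq_three {n : ℕ} (hn : 1 ≤ n) :
    AddMonoid.exponent (Fin n → ZMod 3) = 3 := by
  have h1 : AddMonoid.exponent (Fin n → ZMod 3) ∣ 3 := by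
    apply AddMonoid.exponent_dvd_of_forall_nsmul_eq_zero
    intro x
    have : (3 : ℕ) • x = x + x + x := by abel
    rw [this, three_add_zero]
  have hx : (fun _ => 1 : Fin n → ZMod 3) ≠ 0 := by
    intro h
    have := congrFun h ⟨0, hn⟩
    simp at this
  have hd : addOrderOf (fun _ => 1 : Fin n → ZMod 3) ∣ 3 := by
    apply addOrderOf_dvd_of_nsmul_eq_zero
    have : (3 : ℕ) • (fun _ => 1 : Fin n → ZMod 3) =
        (fun _ => 1) + (fun _ => 1) + (fun _ => 1) := by abel
    rw [this, three_add_zero]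
  have hord : addOrderOf (fun _ => 1 : Fin n → ZMod 3) = 3 := by
    rcases Nat.prime_three.eq_one_or_self_of_dvd _ hd with h | h
    · exact absurd (AddMonoid.addOrderOf_eq_one_iff.mp h) hx
    · exact h
  have h2 : (3 : ℕ) ∣ AddMonoid.exponent (Fin n → ZMod 3) := by
    have := AddMonoid.addOrder_dvd_exponent (fun _ => 1 : Fin n → ZMod 3)
    rwa [hord] at this
  exact Nat.dvd_antisymm h1 h2

theorem harborth_s_eq_two_g (n : ℕ) (hn : 1 ≤ n) :
    EGZ (Fin n → ZMod 3) = 2 * gEGZ (Fin n → ZMod 3) - 1 := by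
  classical
  set A := Fin n → ZMod 3
  have hexp : AddMonoid.exponent A = 3 := exp_eq_three hn
  set SE := {ℓ : ℕ | ∀ S : Multiset A, ℓ ≤ Multiset.card S →
    ∃ T ≤ S, Multiset.card T = AddMonoid.exponent A ∧ T.sum = 0} with hSE
  set SG := {ℓ : ℕ | ∀ S : Multiset A, S.Nodup → ℓ ≤ Multiset.card S →
    ∃ T ≤ S, Multiset.card T = AddMonoid.exponent A ∧ T.sum = 0} with hSG
  have hSGne : (3 ^ n + 1) ∈ SG := by
    intro S hnd hcard
    exfalso
    have h1 : S.toFinset.card ≤ Fintype.card A := Finset.card_le_univ _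
    have h2 : S.toFinset.card = Multiset.card S := Multiset.toFinset_card_of_nodup hnd
    have hA : Fintype.card A = 3 ^ n := by
      simp [A, Fintype.card_fun]
    omega
  set g := gEGZ A with hg
  have hgsInf : g = sInf SG := rfl
  have hgmem : g ∈ SG := Nat.sInf_mem ⟨_, hSGne⟩
  have hgpos : 1 ≤ g := by
    by_contra h
    have hg0 : g = 0 := by omega
    obtain ⟨T, hT, hTc, -⟩ := hgmem (0 : Multiset A) Multiset.nodup_zero (by simp [hg0])
    rw [Multiset.le_zero.mp hT] at hTc
    simp [hexp] at hTc
  have hgm1 : g - 1 ∉ SG := by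
    intro h
    have := Nat.sInf_le h
    omega
  rw [hSG, Set.mem_setOf_eq] at hgm1
  push_neg at hgm1
  obtain ⟨S₀, hS₀nd, hS₀card, hS₀none⟩ := hgm1
  -- Upper bound: 2g - 1 ∈ SE
  have hub : (2 * g - 1) ∈ SE := by
    intro S hcard
    by_cases hbig : ∃ x : A, 3 ≤ S.count x
    · obtain ⟨x, hx⟩ := hbig
      refine ⟨{x, x, x}, ?_, by simp [hexp], by
        simpa [add_assoc] using three_add_zero x⟩
      rw [Multiset.le_iff_count]
      intro a
      by_cases hax : a = x
      · subst hax; simpa using hx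
      · simp [Multiset.count_cons, Multiset.count_singleton, hax]
    · push_neg at hbig
      have hdedup : g ≤ Multiset.card S.dedup := by
        have hsum : ∑ a ∈ S.toFinset, S.count a = Multiset.card S :=
          Multiset.toFinset_sum_count_eq S
        have hle : ∑ a ∈ S.toFinset, S.count a ≤ ∑ _a ∈ S.toFinset, 2 :=
          Finset.sum_le_sum fun a _ => by have := hbig a; omega
        have h2 : ∑ _a ∈ S.toFinset, 2 = 2 * S.toFinset.card := by
          simp [Finset.sum_const, mul_comm]
        have hdc : Multiset.card S.dedup = S.toFinset.card := rfl
        omega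
      obtain ⟨T, hT, hTc, hTs⟩ := hgmem S.dedup (Multiset.nodup_dedup S) hdedup
      exact ⟨T, hT.trans (Multiset.dedup_le S), hTc, hTs⟩
  -- Lower bound: 2g - 2 ∉ SE
  have hlb : (2 * g - 2) ∉ SE := by
    intro h
    obtain ⟨T, hT, hTc, hTs⟩ := h (S₀ + S₀) (by rw [Multiset.card_add]; omega)
    rw [hexp] at hTc
    obtain ⟨a, b, c, rfl⟩ := Multiset.card_eq_three.mp hTc
    have hcount : ∀ x : A, Multiset.count x ({a, b, c} : Multiset A) ≤ 2 := by
      intro x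
      have h1 := Multiset.le_iff_count.mp hT x
      have hc2 : Multiset.count x (S₀ + S₀) = 2 * Multiset.count x S₀ := by
        rw [Multiset.count_add]; ring
      have hcn : Multiset.count x S₀ ≤ 1 := Multiset.nodup_iff_count_le_one.mp hS₀nd x
      omega
    have hsum : a + b + c = 0 := by
      simpa [add_assoc] using hTs
    by_cases hab : a = b
    · have hca : c = a := eq_of_double (hab ▸ hsum)
      have hthis := hcount a
      rw [← hab, hca] at hthis
      simp at hthis
    · by_cases hac : a = c
      · subst hac
        have h' : a + a + b = 0 := by
          rw [show a + a + b = a + b + a from by ring]; exact hsum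
        have hba : b = a := eq_of_double h'
        have hthis := hcount a
        rw [hba] at hthis
        simp at hthis
      · by_cases hbc : b = c
        · subst hbc
          have h' : b + b + a = 0 := by
            rw [show b + b + a = a + b + b from by ring]; exact hsum
          have hab' : a = b := eq_of_double h'
          have hthis := hcount b
          rw [hab'] at hthis
          simp at hthis
        · -- all distinct: T ≤ S₀
          have hTnd : ({a, b, c} : Multiset A).Nodup := by
            simp [hab, hac, hbc]
          have hTS₀ : ({a, b, c} : Multiset A) ≤ S₀ := by
            rw [Multiset.le_iff_count]
            intro x
            have h1 := Multiset.le_iff_count.mp hT x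
            rw [Multiset.count_add] at h1
            have h2 : Multiset.count x ({a, b, c} : Multiset A) ≤ 1 :=
              Multiset.nodup_iff_count_le_one.mp hTnd x
            omega
          exact hS₀none {a, b, c} hTS₀ (by simp [hexp]) hTs
  -- conclude
  have hmono : ∀ ℓ ℓ' : ℕ, ℓ ∈ SE → ℓ ≤ ℓ' → ℓ' ∈ SE := by
    intro ℓ ℓ' hℓ hle S hcard
    exact hℓ S (hle.trans hcard)
  have hEeq : EGZ A = sInf SE := rfl
  have h1 : EGZ A ≤ 2 * g - 1 := by rw [hEeq]; exact Nat.sInf_le hub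
  have h2 : ¬ EGZ A < 2 * g - 1 := by
    intro hlt
    have hmemE : EGZ A ∈ SE := by rw [hEeq]; exact Nat.sInf_mem ⟨_, hub⟩
    exact hlb (hmono _ _ hmemE (by omega))
  show EGZ A = 2 * g - 1
  omega
end

section
/- Let $G$ be a finite abelian group and let $H \leq G$ be a subgroup such that $\exp(G) = \exp(H) \cdot \exp(G/H)$. Then $s(G) \leq \exp(G/H)\,(s(H) - 1) + s(G/H)$. -/
/-!
Split a long sequence over `G` greedily into `s(H)` disjoint blocks of length `exp(G/H)` whose
sums lie in `H`: as long as fewer than `s(H)` blocks are taken, at least `s(G/H)` terms remain,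
so the next block exists. The definition of `s(H)`, applied to the `s(H)` block sums, selects
`exp(H)` blocks whose sums add up to `0`; their union is a zero-sum subsequence of length
`exp(H) * exp(G/H) = exp(G)`.
-/

open Multiset

theorem Multiset.exists_le_map_eq_of_le_map {α β : Type*} {f : α → β} {S : Multiset α}
    {T : Multiset β} (h : T ≤ S.map f) : ∃ U ≤ S, U.map f = T := by
  induction S using Quotient.inductionOn
  induction T using Quotient.inductionOn
  obtain ⟨t', ht', hsub⟩ := (Multiset.coe_le.mp h)
  obtain ⟨u, hu, rfl⟩ := List.sublist_map_iff.mp hsub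
  exact ⟨u, Multiset.coe_le.mpr hu.subperm, Multiset.coe_eq_coe.mpr ht'⟩

theorem Multiset.exists_le_count_of_card_mul_le {α : Type*} [Fintype α] [Nonempty α]
    [DecidableEq α] {S : Multiset α} {n : ℕ} (h : Fintype.card α * n ≤ card S) :
    ∃ a, n ≤ S.count a := by
  by_contra! hlt
  have : card S < Fintype.card α * n := calc
    card S = ∑ a, S.count a := (Multiset.sum_count_eq_card fun a _ => Finset.mem_univ a).symm
    _ < ∑ _a : α, n := Finset.sum_lt_sum_of_nonempty Finset.univ_nonempty fun a _ => hlt a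
    _ = Fintype.card α * n := by simp
  omega

section EGZ

variable (A : Type) [AddCommGroup A] [Finite A]

theorem EGZ_set_nonempty :
    {ℓ : ℕ | ∀ S : Multiset A, ℓ ≤ card S →
      ∃ T ≤ S, card T = AddMonoid.exponent A ∧ T.sum = 0}.Nonempty := by
  classical
  have := Fintype.ofFinite A
  refine ⟨Fintype.card A * AddMonoid.exponent A, fun S hS => ?_⟩
  obtain ⟨a, ha⟩ := Multiset.exists_le_count_of_card_mul_le hS
  exact ⟨replicate _ a, le_count_iff_replicate_le.mp ha, card_replicate _ _,
    by rw [sum_replicate, AddMonoid.exponent_nsmul_eq_zero]⟩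

variable {A}

theorem exists_le_card_eq_exponent_sum_eq_zero {S : Multiset A} (hS : EGZ A ≤ card S) :
    ∃ T ≤ S, card T = AddMonoid.exponent A ∧ T.sum = 0 :=
  Nat.sInf_mem (EGZ_set_nonempty A) S hS

variable (A) in
theorem one_le_EGZ : 1 ≤ EGZ A := by
  by_contra! h
  obtain ⟨T, hT, hcard, -⟩ := exists_le_card_eq_exponent_sum_eq_zero (S := (0 : Multiset A))
    (by omega)
  rw [Multiset.le_zero.mp hT, card_zero] at hcard
  exact AddMonoid.exponent_ne_zero_of_finite hcard.symm

end EGZ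

theorem Multiset.join_le_join {α : Type*} {C C' : Multiset (Multiset α)} (h : C' ≤ C) :
    C'.join ≤ C.join := by
  obtain ⟨D, rfl⟩ := Multiset.le_iff_exists_add.mp h
  simp

section Blocks

variable {G Q : Type} [AddCommGroup G] [AddCommGroup Q] [Finite Q]

theorem exists_le_card_eq_exponent_map_sum_eq_zero (φ : G →+ Q) {S : Multiset G}
    (hS : EGZ Q ≤ card S) : ∃ T ≤ S, card T = AddMonoid.exponent Q ∧ φ T.sum = 0 := by
  obtain ⟨T', hT'S, hcard, hsum⟩ :=
    exists_le_card_eq_exponent_sum_eq_zero (S := S.map φ) (by rwa [card_map])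
  obtain ⟨T, hTS, rfl⟩ := exists_le_map_eq_of_le_map hT'S
  exact ⟨T, hTS, by rwa [card_map] at hcard, by rwa [map_multiset_sum]⟩

/-- The hypothesis is `exp Q * (k - 1) + EGZ Q ≤ card S`, stated without truncated
subtraction. -/
theorem exists_blocks_card_eq_exponent_map_sum_eq_zero (φ : G →+ Q) (k : ℕ) {S : Multiset G}
    (hS : AddMonoid.exponent Q * k + EGZ Q ≤ card S + AddMonoid.exponent Q) :
    ∃ C : Multiset (Multiset G), card C = k ∧ C.join ≤ S ∧
      ∀ T ∈ C, card T = AddMonoid.exponent Q ∧ φ T.sum = 0 := by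
  classical
  induction k generalizing S with
  | zero => exact ⟨0, rfl, by simp, by simp⟩
  | succ k ih =>
    rw [Nat.mul_succ] at hS
    obtain ⟨T, hTS, hTcard, hTsum⟩ :=
      exists_le_card_eq_exponent_map_sum_eq_zero φ (S := S) (by omega)
    have hcard_sub : card (S - T) = card S - AddMonoid.exponent Q := by
      rw [card_sub hTS, hTcard]
    have hT_le_S : AddMonoid.exponent Q ≤ card S := hTcard ▸ card_le_card hTS
    obtain ⟨C, hCcard, hCS, hC⟩ := ih (S := S - T) (by omega)
    refine ⟨T ::ₘ C, by rw [card_cons, hCcard], ?_, ?_⟩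
    · rw [join_cons, ← add_tsub_cancel_of_le hTS]
      exact add_le_add_right hCS T
    · simpa [forall_mem_cons] using ⟨⟨hTcard, hTsum⟩, hC⟩

theorem AddSubgroup.exists_le_card_eq_exponent_sum_eq_zero {H : AddSubgroup G} [Finite H]
    {S : Multiset G} (hSH : ∀ x ∈ S, x ∈ H) (hS : EGZ H ≤ card S) :
    ∃ T ≤ S, card T = AddMonoid.exponent H ∧ T.sum = 0 := by
  lift S to Multiset H using hSH
  obtain ⟨T, hTS, hcard, hsum⟩ := _root_.exists_le_card_eq_exponent_sum_eq_zero
    (by rwa [card_map] at hS)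
  exact ⟨T.map (↑), map_le_map hTS, by rw [card_map, hcard],
    by rw [← H.coe_subtype, ← map_multiset_sum, hsum, _root_.map_zero]⟩

end Blocks

theorem egz_subgroup_quotient (G : Type) [AddCommGroup G] [Finite G] (H : AddSubgroup G)
    (hexp : AddMonoid.exponent G = AddMonoid.exponent H * AddMonoid.exponent (G ⧸ H)) :
    EGZ G ≤ AddMonoid.exponent (G ⧸ H) * (EGZ H - 1) + EGZ (G ⧸ H) := by
  refine Nat.sInf_le fun S hS => ?_
  have hH := one_le_EGZ H
  obtain ⟨C, hCcard, hCS, hC⟩ := exists_blocks_card_eq_exponent_map_sum_eq_zero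
    (QuotientAddGroup.mk' H) (EGZ H) (S := S) (by
      rw [← Nat.sub_add_cancel hH, Nat.mul_succ]; omega)
  obtain ⟨T, hTC, hTcard, hTsum⟩ := H.exists_le_card_eq_exponent_sum_eq_zero (S := C.map sum)
    (by simpa using fun U hU => (QuotientAddGroup.eq_zero_iff _).mp (hC U hU).2)
    (by rw [card_map, hCcard])
  obtain ⟨C', hC'C, rfl⟩ := exists_le_map_eq_of_le_map hTC
  have hcard : ∀ n ∈ C'.map card, n = AddMonoid.exponent (G ⧸ H) := by
    simpa using fun U hU => (hC U (mem_of_le hC'C hU)).1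
  refine ⟨C'.join, (join_le_join hC'C).trans hCS, ?_, by rwa [sum_join]⟩
  rw [card_join, eq_replicate_card.mpr hcard, sum_replicate, smul_eq_mul, card_map, ← card_map sum,
    hTcard, hexp]
end

section
/- Let $p$ be a prime and $m \geq 1$ an integer. Let $(a_1, \ldots, a_m) \in (\mathbb{Z}_p)^m$ be a fixed vector such that $a_1 + \cdots + a_m = 0$ in $\mathbb{Z}_p$ and $a_m \neq 0$ in $\mathbb{Z}_p$. Let $\mathcal{F} \subseteq (\mathbb{Z}_p)^n$ be a subset with the property: whenever $b_1, \ldots, b_m \in \mathcal{F}$ are vectors such that $b_i \neq b_j$ for some $1 \leq i < j \leq m$, then $\sum_{i=1}^m a_i b_i \neq 0$. Then $|\mathcal{F}| \leq m \cdot \#\{\alpha \in \{0, \ldots, p-1\}^n : \sum_{i=1}^n \alpha_i \leq \frac{n(p-1)}{m}\}$. -/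
/-!
Tao's slice-rank argument. On `Fᵐ` consider `T b = ∏ⱼ (1 - (∑ᵢ aᵢ bᵢⱼ) ^ (p - 1))`. By Fermat,
`T` is `1` on the diagonal (as `∑ᵢ aᵢ = 0`) and `0` off it (by the hypothesis on `F`), so its slice
rank is at least `|F|`: contracting the last coordinate against a vector of large support that is
orthogonal to the slices in that coordinate lowers `m` by one, down to `m = 2`, where slice rank is
matrix rank. On the other hand `T` is a polynomial of degree `≤ n (p - 1)`, so every monomial has a
block of variables `bᵢ` of degree `≤ n (p - 1) / m`; lowering its exponents below `p` makes it a
slice `f (bᵢ) g (b)` with `f` one of the `m · #{α}` monomials counted on the right.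
-/

open Finset

namespace Matrix

variable {m n ι K : Type*} [Fintype n] [Field K]

theorem rank_add_le (A B : Matrix m n K) : (A + B).rank ≤ A.rank + B.rank := by
  rw [Matrix.rank, Matrix.rank, Matrix.rank, Matrix.mulVecLin_add]
  exact (Submodule.finrank_mono (LinearMap.range_add_le _ _)).trans
    (Submodule.finrank_add_le_finrank_add_finrank _ _)

theorem rank_sum_le (s : Finset ι) (A : ι → Matrix m n K) :
    (∑ i ∈ s, A i).rank ≤ ∑ i ∈ s, (A i).rank :=
  le_sum_of_subadditive (M := Matrix m n K) Matrix.rank (rank_zero (n := n)).le rank_add_le s A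

end Matrix

theorem Submodule.exists_mem_finrank_le_card_support {K Y : Type*} [Field K] [DecidableEq K]
    [Fintype Y] (W : Submodule K (Y → K)) :
    ∃ h ∈ W, Module.finrank K W ≤ #{y | h y ≠ 0} := by
  classical
  obtain ⟨A, hA, hmax⟩ := exists_max_image
    (univ.filter fun A : Finset Y => ∃ w ∈ W, univ.filter (fun y => w y ≠ 0) = A) card
    ⟨∅, mem_filter.2 ⟨mem_univ _, 0, W.zero_mem, by simp⟩⟩
  obtain ⟨h, hW, rfl⟩ := (mem_filter.1 hA).2
  refine ⟨h, hW, ?_⟩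
  set S : Finset Y := {y | h y ≠ 0}
  -- adding to `h` an element of `W` vanishing on `S` would enlarge the support
  have hvanish : ∀ w ∈ W, (∀ y ∈ S, w y = 0) → w = 0 := by
    intro w hw hwS
    set S' : Finset Y := {y | w y ≠ 0}
    have hdisj : Disjoint S S' :=
      disjoint_left.2 fun y hy hy' => (mem_filter.1 hy').2 (hwS y hy)
    have hsub : S ∪ S' ⊆ ({y | (h + w) y ≠ 0} : Finset Y) := by
      intro y hy
      simp only [S, S', mem_union, mem_filter, mem_univ, true_and, Pi.add_apply] at hy ⊢
      rcases hy with hy | hy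
      · rwa [hwS y (by simpa [S] using hy), add_zero]
      · have : h y = 0 := by_contra fun hhy => hy (hwS y (by simpa [S] using hhy))
        rwa [this, zero_add]
    have := (card_le_card hsub).trans
      (hmax _ (mem_filter.2 ⟨mem_univ _, h + w, W.add_mem hW hw, rfl⟩))
    rw [card_union_of_disjoint hdisj] at this
    ext y
    by_contra hy
    have : 0 < #S' := card_pos.2 ⟨y, by simpa [S'] using hy⟩
    omega
  let restrict : W →ₗ[K] S → K := (LinearMap.funLeft K K Subtype.val).comp W.subtype
  have hinj : Function.Injective restrict := by
    rw [← LinearMap.ker_eq_bot, LinearMap.ker_eq_bot']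
    exact fun w hw => Subtype.ext <| hvanish w w.2 fun y hy => congrFun hw ⟨y, hy⟩
  simpa [Module.finrank_fintype_fun_eq_card] using LinearMap.finrank_le_finrank_of_injective hinj

section SliceDecomposition

variable {K X Y ι : Type*} {m : ℕ}

structure IsSliceDecomposition [CommSemiring K] (T : (Fin m → X) → K) (s : Finset ι)
    (idx : ι → Fin m) (f : ι → X → K) (g : ι → (Fin m → X) → K) : Prop where
  indep : ∀ t ∈ s, ∀ b b' : Fin m → X, (∀ j ≠ idx t, b j = b' j) → g t b = g t b'
  eq_sum : ∀ b, T b = ∑ t ∈ s, f t (b (idx t)) * g t b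

def IsDiagonal [Zero K] (T : (Fin m → X) → K) : Prop :=
  ∀ b : Fin m → X, (∃ i j, b i ≠ b j) → T b = 0

variable [CommSemiring K]

theorem IsSliceDecomposition.comp {T : (Fin m → Y) → K} {s : Finset ι} {idx : ι → Fin m}
    {f : ι → Y → K} {g : ι → (Fin m → Y) → K} (hT : IsSliceDecomposition T s idx f g)
    (φ : X → Y) :
    IsSliceDecomposition (fun b => T (φ ∘ b)) s idx (fun t => f t ∘ φ)
      (fun t b => g t (φ ∘ b)) where
  indep t ht _ _ hbb' := hT.indep t ht _ _ fun j hj => congrArg φ (hbb' j hj)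
  eq_sum b := hT.eq_sum (φ ∘ b)

theorem isSliceDecomposition_of_eq_sum {κ : Type*} [DecidableEq ι] {T : (Fin m → X) → K}
    {s : Finset ι} {idx : ι → Fin m} {f : ι → X → K} (B : Finset κ) (key : κ → ι)
    (hkey : ∀ β ∈ B, key β ∈ s) (r : κ → (Fin m → X) → K)
    (hr : ∀ β ∈ B, ∀ b b' : Fin m → X, (∀ j ≠ idx (key β), b j = b' j) → r β b = r β b')
    (hT : ∀ b, T b = ∑ β ∈ B, f (key β) (b (idx (key β))) * r β b) :
    IsSliceDecomposition T s idx f fun t b => ∑ β ∈ B with key β = t, r β b where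
  indep t _ b b' hbb' := sum_congr rfl fun β hβ => by
    obtain ⟨hβB, rfl⟩ := mem_filter.1 hβ
    exact hr β hβB b b' hbb'
  eq_sum b := by
    rw [hT, ← sum_fiberwise_of_maps_to hkey]
    refine sum_congr rfl fun t _ => ?_
    rw [mul_sum]
    exact sum_congr rfl fun β hβ => by rw [(mem_filter.1 hβ).2]

variable [Fintype X]

def contractLast (T : (Fin (m + 1) → X) → K) (h : X → K) (y : Fin m → X) : K :=
  ∑ x, T (Fin.snoc y x) * h x

theorem isDiagonal_contractLast {T : (Fin (m + 1) → X) → K} (hT : IsDiagonal T) (h : X → K) :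
    IsDiagonal (contractLast T h) := by
  rintro y ⟨i, j, hij⟩
  refine sum_eq_zero fun x _ => ?_
  rw [hT _ ⟨i.castSucc, j.castSucc, by simpa using hij⟩, zero_mul]

theorem contractLast_const {T : (Fin (m + 2) → X) → K} (hT : IsDiagonal T)
    (h : X → K) (y : X) : contractLast T h (fun _ => y) = T (fun _ => y) * h y := by
  classical
  rw [contractLast, sum_eq_single y]
  · congr
    ext j
    induction j using Fin.lastCases <;> simp
  · intro x _ hxy
    have hne : Fin.snoc (α := fun _ => X) (fun _ : Fin (m + 1) => y) x (Fin.last _) ≠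
        Fin.snoc (α := fun _ => X) (fun _ : Fin (m + 1) => y) x 0 := by
      rwa [Fin.snoc_last, ← Fin.castSucc_zero, Fin.snoc_castSucc]
    rw [hT _ ⟨_, _, hne⟩, zero_mul]
  · simp

theorem isSliceDecomposition_contractLast {T : (Fin (m + 2) → X) → K} {s : Finset ι}
    {idx : ι → Fin (m + 2)} {f : ι → X → K} {g : ι → (Fin (m + 2) → X) → K}
    (hT : IsSliceDecomposition T s idx f g) (h : X → K)
    (hh : ∀ t ∈ s, idx t = Fin.last _ → ∑ x, f t x * h x = 0) :
    ∃ idx' g',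
      IsSliceDecomposition (contractLast T h) {t ∈ s | idx t ≠ Fin.last _} idx' f g' := by
  classical
  let idx' t : Fin (m + 1) := if ht : idx t = Fin.last _ then 0 else (idx t).castPred ht
  have hidx' : ∀ t, idx t ≠ Fin.last _ → (idx' t).castSucc = idx t := fun t ht => by
    simp [idx', ht]
  refine ⟨idx', fun t y => ∑ x, g t (Fin.snoc y x) * h x, ⟨?_, fun y => ?_⟩⟩
  · intro t ht y y' hyy'
    obtain ⟨hts, hlast⟩ := mem_filter.1 ht
    refine sum_congr rfl fun x _ => congrArg (· * h x) (hT.indep t hts _ _ fun j hj => ?_)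
    induction j using Fin.lastCases with
    | last => simp
    | cast j => simpa using hyy' j fun hj' => hj (by rw [← hidx' t hlast, hj'])
  · have hlast_zero : ∀ t ∈ s, idx t = Fin.last _ →
        ∑ x, f t (Fin.snoc (α := fun _ => X) y x (idx t)) * g t (Fin.snoc y x) * h x = 0 :=
        fun t ht hlast => by
      have hg : ∀ x, g t (Fin.snoc y x) = g t (Fin.snoc y (y 0)) := fun x =>
        hT.indep t ht _ _ fun j hj => by
          induction j using Fin.lastCases with
          | last => exact absurd hlast.symm hj
          | cast j => simp
      rw [← mul_zero (g t (Fin.snoc y (y 0))), ← hh t ht hlast, mul_sum]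
      simp only [hg, hlast, Fin.snoc_last]
      exact sum_congr rfl fun x _ => by ring
    simp_rw [contractLast, hT.eq_sum, sum_mul]
    rw [sum_comm, ← sum_filter_add_sum_filter_not s (idx · = Fin.last _),
      sum_eq_zero fun t ht => hlast_zero t (mem_filter.1 ht).1 (mem_filter.1 ht).2, zero_add]
    refine sum_congr rfl fun t ht => ?_
    rw [mul_sum]
    refine sum_congr rfl fun x _ => ?_
    rw [← hidx' t (mem_filter.1 ht).2, Fin.snoc_castSucc, mul_assoc]

end SliceDecomposition

section DiagonalBound

variable {K X ι : Type*} [Field K] [Fintype X]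

theorem rank_slice_le_one {i : Fin 2} {u : X → K} {v : (Fin 2 → X) → K}
    (hv : ∀ b b' : Fin 2 → X, (∀ j ≠ i, b j = b' j) → v b = v b') :
    (Matrix.of fun x z => u (![x, z] i) * v ![x, z]).rank ≤ 1 := by
  obtain rfl | rfl : i = 0 ∨ i = 1 := by omega
  · have : Matrix.of (fun x z => u (![x, z] 0) * v ![x, z]) =
        Matrix.vecMulVec u fun z => v ![z, z] := by
      ext x z
      simp [Matrix.vecMulVec_apply, hv ![x, z] ![z, z] (by simp [Fin.forall_fin_two])]
    exact this ▸ Matrix.rank_vecMulVec_le _ _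
  · have : Matrix.of (fun x z => u (![x, z] 1) * v ![x, z]) =
        Matrix.vecMulVec (fun x => v ![x, x]) u := by
      ext x z
      simp [Matrix.vecMulVec_apply, hv ![x, z] ![x, x] (by simp [Fin.forall_fin_two]), mul_comm]
    exact this ▸ Matrix.rank_vecMulVec_le _ _

variable [DecidableEq K] {s : Finset ι} {f : ι → X → K}

theorem IsSliceDecomposition.card_le_of_isDiagonal_two {T : (Fin 2 → X) → K} {idx : ι → Fin 2}
    {g : ι → (Fin 2 → X) → K} (hT : IsSliceDecomposition T s idx f g) (hdiag : IsDiagonal T) :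
    #{x | T (fun _ => x) ≠ 0} ≤ #s := by
  classical
  let M : Matrix X X K := Matrix.of fun x z => T ![x, z]
  have hM_diag : M = Matrix.diagonal fun x => T fun _ => x := by
    ext x z
    by_cases hxz : x = z
    · subst hxz
      simp only [M, Matrix.of_apply, Matrix.diagonal_apply_eq]
      congr
      ext j
      fin_cases j <;> rfl
    · simp only [M, Matrix.of_apply, Matrix.diagonal_apply_ne _ hxz]
      exact hdiag _ ⟨0, 1, by simpa using hxz⟩
  have hM_sum : M = ∑ t ∈ s, Matrix.of fun x z => f t (![x, z] (idx t)) * g t ![x, z] := by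
    ext x z
    simp [M, Matrix.sum_apply, hT.eq_sum]
  calc #{x | T (fun _ => x) ≠ 0} = M.rank := by
        rw [hM_diag, Matrix.rank_diagonal, Fintype.card_subtype]
    _ ≤ ∑ t ∈ s, 1 := by
        rw [hM_sum]
        exact (Matrix.rank_sum_le _ _).trans
          (sum_le_sum fun t ht => rank_slice_le_one (hT.indep t ht))
    _ = #s := by simp

theorem IsSliceDecomposition.card_le_of_isDiagonal {m : ℕ} {T : (Fin (m + 2) → X) → K}
    {idx : ι → Fin (m + 2)} {g : ι → (Fin (m + 2) → X) → K}
    (hT : IsSliceDecomposition T s idx f g) (hdiag : IsDiagonal T) :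
    #{x | T (fun _ => x) ≠ 0} ≤ #s := by
  classical
  induction m generalizing s with
  | zero => exact hT.card_le_of_isDiagonal_two hdiag
  | succ m ih =>
    set slast := {t ∈ s | idx t = Fin.last _}
    let Φ := (Matrix.of fun (t : slast) x => f t x).mulVecLin
    obtain ⟨h, hker, hsupp⟩ := (LinearMap.ker Φ).exists_mem_finrank_le_card_support
    have hrank : Fintype.card X ≤ Module.finrank K (LinearMap.ker Φ) + #slast := by
      have := LinearMap.finrank_range_add_finrank_ker Φ
      have := (LinearMap.range Φ).finrank_le
      simp only [Module.finrank_fintype_fun_eq_card, Fintype.card_coe] at *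
      omega
    obtain ⟨idx', g', hT'⟩ := isSliceDecomposition_contractLast hT h fun t ht hlast =>
      congrFun (LinearMap.mem_ker.1 hker) ⟨t, mem_filter.2 ⟨ht, hlast⟩⟩
    set D : Finset X := {x | T (fun _ => x) ≠ 0}
    set E : Finset X := {x | h x ≠ 0}
    have hcontract : #(D ∩ E) ≤ #{t ∈ s | idx t ≠ Fin.last _} := by
      simpa only [contractLast_const hdiag, mul_ne_zero_iff, filter_and]
        using ih hT' (isDiagonal_contractLast hdiag h)
    have hsplit : #slast + #{t ∈ s | idx t ≠ Fin.last _} = #s :=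
      card_filter_add_card_filter_not _
    have := card_inter_add_card_union D E
    have := card_le_univ (D ∪ E)
    omega

end DiagonalBound

namespace FiniteField

variable {K ι : Type*} [Field K] [Fintype K]

theorem exists_le_lt_card_pow_eq (e : ℕ) :
    ∃ e' ≤ e, e' < Fintype.card K ∧ ∀ x : K, x ^ e' = x ^ e := by
  induction e using Nat.strong_induction_on with
  | _ e ih =>
    by_cases he : e < Fintype.card K
    · exact ⟨e, le_rfl, he, fun _ => rfl⟩
    have hq := Fintype.one_lt_card (α := K)
    obtain ⟨e', hle, hlt, hpow⟩ := ih (e - Fintype.card K + 1) (by omega)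
    refine ⟨e', by omega, hlt, fun x => ?_⟩
    -- `x ^ q = x` lowers the exponent by `q - 1`
    rw [hpow, pow_succ]
    nth_rw 2 [← pow_card x]
    rw [← pow_add, Nat.sub_add_cancel (not_lt.1 he)]

theorem prod_one_sub_pow_card_sub_one [Fintype ι] [DecidableEq (ι → K)] (v : ι → K) :
    ∏ i, (1 - v i ^ (Fintype.card K - 1)) = if v = 0 then 1 else 0 := by
  split_ifs with hv
  · have := Fintype.one_lt_card (α := K)
    simp [hv, zero_pow (show Fintype.card K - 1 ≠ 0 by omega)]
  · obtain ⟨i, hi⟩ := Function.ne_iff.1 hv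
    exact prod_eq_zero (mem_univ i) (by rw [pow_card_sub_one_eq_one _ hi, sub_self])

end FiniteField

section PolynomialMethod

open MvPolynomial

variable {K : Type*} [Field K] [Fintype K] {m n : ℕ}

/-- The monomials of a polynomial of total degree at most `d` in `m` blocks of variables each
have a block of degree at most `d / m`, and over `K` every exponent can be lowered below
`card K`. -/
theorem isSliceDecomposition_eval {q d : ℕ} (hq : Fintype.card K = q) (hm : 0 < m)
    (Q : MvPolynomial (Fin m × Fin n) K) (hQ : Q.totalDegree ≤ d) :
    ∃ g, IsSliceDecomposition (fun b : Fin m → Fin n → K => eval (fun ij => b ij.1 ij.2) Q)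
      (univ ×ˢ ({α | m * ∑ j, (α j : ℕ) ≤ d} : Finset (Fin n → Fin q))) Prod.fst
      (fun t x => ∏ j, x j ^ (t.2 j : ℕ)) g := by
  classical
  subst hq
  have hblock : ∀ β ∈ Q.support, ∃ i, m * ∑ j, β (i, j) ≤ d := by
    intro β hβ
    have hdeg : ∑ i, ∑ j, β (i, j) ≤ d := by
      have := (le_totalDegree hβ).trans hQ
      rwa [Finsupp.sum_fintype _ _ fun _ => rfl, Fintype.sum_prod_type] at this
    obtain ⟨i, -, hi⟩ :=
      exists_le_of_sum_le (f := fun i => m * ∑ j, β (i, j)) (g := fun _ => d) ⟨⟨0, hm⟩, mem_univ _⟩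
        (by rw [← mul_sum]; simpa using Nat.mul_le_mul_left m hdeg)
    exact ⟨i, hi⟩
  have : Nonempty (Fin m) := ⟨⟨0, hm⟩⟩
  choose! blk hblk using hblock
  choose red hred_le hred_lt hred using FiniteField.exists_le_lt_card_pow_eq (K := K)
  let key β : Fin m × (Fin n → Fin (Fintype.card K)) :=
    (blk β, fun j => ⟨red (β (blk β, j)), hred_lt _⟩)
  refine ⟨_, isSliceDecomposition_of_eq_sum Q.support key (fun β hβ => ?_)
    (fun β (b : Fin m → Fin n → K) =>
      coeff β Q * ∏ i ∈ univ.erase (blk β), ∏ j, b i j ^ β (i, j))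
    (fun β _ b b' hbb' => ?_) fun b => ?_⟩
  · refine mem_product.2 ⟨mem_univ _, mem_filter.2 ⟨mem_univ _, ?_⟩⟩
    exact (Nat.mul_le_mul_left m (sum_le_sum fun j _ => hred_le _)).trans (hblk β hβ)
  · exact congrArg _ (prod_congr rfl fun i hi => by rw [hbb' i (mem_erase.1 hi).1])
  · rw [eval_eq']
    refine sum_congr rfl fun β _ => ?_
    simp only [key, hred, Fintype.prod_prod_type, ← mul_prod_erase univ _ (mem_univ (blk β))]
    ring

end PolynomialMethod

section RelationIndicator

open MvPolynomial

variable {K : Type*} [Field K] [Fintype K] {m n : ℕ}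

noncomputable def relationIndicator (a : Fin m → K) : MvPolynomial (Fin m × Fin n) K :=
  ∏ j, (1 - (∑ i, C (a i) * X (i, j)) ^ (Fintype.card K - 1))

theorem totalDegree_relationIndicator_le (a : Fin m → K) :
    (relationIndicator (n := n) a).totalDegree ≤ n * (Fintype.card K - 1) := by
  have hfactor : ∀ j, (1 - (∑ i, C (a i) * X (i, j)) ^ (Fintype.card K - 1) :
      MvPolynomial (Fin m × Fin n) K).totalDegree ≤ Fintype.card K - 1 := fun j => by
    have hlin : (∑ i, C (a i) * X (i, j) : MvPolynomial (Fin m × Fin n) K).IsHomogeneous 1 :=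
      IsHomogeneous.sum _ _ _ fun i _ => (isHomogeneous_X K (i, j)).C_mul (a i)
    exact (totalDegree_sub _ _).trans <| max_le (by simp) <|
      ((hlin.pow _).totalDegree_le).trans_eq (one_mul _)
  rw [relationIndicator]
  exact (totalDegree_finsetProd _ _).trans
    ((sum_le_sum fun j _ => hfactor j).trans_eq (by simp))

theorem eval_relationIndicator [DecidableEq K] (a : Fin m → K) (b : Fin m → Fin n → K) :
    eval (fun ij => b ij.1 ij.2) (relationIndicator a) =
      if ∑ i, a i • b i = 0 then 1 else 0 := by
  rw [← FiniteField.prod_one_sub_pow_card_sub_one]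
  simp [relationIndicator, map_prod]

end RelationIndicator

theorem natCast_le_mul_sub_one_div_iff {s m n p : ℕ} (hm : 0 < m) (hp : 1 ≤ p) :
    (s : ℝ) ≤ n * ((p : ℝ) - 1) / m ↔ m * s ≤ n * (p - 1) := by
  rw [le_div_iff₀ (by positivity), ← Nat.cast_one, ← Nat.cast_sub hp, mul_comm]
  norm_cast

theorem petrov_bound (p : ℕ) (hp : p.Prime) (m : ℕ) (hm : 1 ≤ m) (n : ℕ)
    (a : Fin m → ZMod p) (hsum : ∑ i, a i = 0)
    (F : Finset (Fin n → ZMod p))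
    (hF : ∀ b : Fin m → (Fin n → ZMod p), (∀ i, b i ∈ F) →
      (∃ i j : Fin m, i < j ∧ b i ≠ b j) → ∑ i, a i • b i ≠ 0) :
    F.card ≤ m * (Finset.univ.filter
      (fun α : Fin n → Fin p =>
        ((∑ i, (α i : ℕ) : ℕ) : ℝ) ≤ (n : ℝ) * ((p : ℝ) - 1) / m)).card := by
  have := Fact.mk hp
  simp_rw [natCast_le_mul_sub_one_div_iff hm hp.one_le]
  obtain rfl | hm := hm.eq_or_lt
  · have hall : ∀ α : Fin n → Fin p, 1 * ∑ j, (α j : ℕ) ≤ n * (p - 1) := fun α => by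
      simpa using sum_le_sum (s := univ) fun j _ => Nat.le_pred_of_lt (α j).2
    rw [filter_true_of_mem fun α _ => hall α]
    simpa [ZMod.card] using F.card_le_univ
  obtain ⟨k, rfl⟩ : ∃ k, m = k + 2 := ⟨m - 2, by omega⟩
  let T (b : Fin (k + 2) → F) : ZMod p :=
    MvPolynomial.eval (fun ij => (b ij.1 : Fin n → ZMod p) ij.2) (relationIndicator a)
  have hT b : T b = if ∑ i, a i • (b i : Fin n → ZMod p) = 0 then 1 else 0 :=
    eval_relationIndicator a (fun i => (b i : Fin n → ZMod p))
  have hdiag : IsDiagonal T := by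
    rintro b ⟨i, j, hij⟩
    have hij' : (b i : Fin n → ZMod p) ≠ b j := Subtype.coe_ne_coe.2 hij
    rw [hT, if_neg (hF _ (fun i => (b i).2) ?_)]
    rcases lt_or_gt_of_ne (ne_of_apply_ne b hij) with h | h
    exacts [⟨i, j, h, hij'⟩, ⟨j, i, h, hij'.symm⟩]
  have hconst x : T (fun _ => x) = 1 := by simp [hT, ← sum_smul, hsum]
  obtain ⟨g, hdec⟩ := isSliceDecomposition_eval (ZMod.card p) (by omega) _
    (totalDegree_relationIndicator_le (n := n) a)
  have hbound := (hdec.comp (fun x : F => (x : Fin n → ZMod p))).card_le_of_isDiagonal hdiag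
  change #{x | T (fun _ => x) ≠ 0} ≤ _ at hbound
  simpa [hconst, card_product, ZMod.card] using hbound
end

section
/- Let $p$ be a prime and $r \geq 2$ an integer such that $p$ divides $r$. Let $\mathcal{F} \subseteq (\mathbb{Z}_p)^n$ be a subset with the property: whenever $b_1, \ldots, b_r \in \mathcal{F}$ are vectors such that $b_i \neq b_j$ for some $1 \leq i < j \leq r$, then $b_1 + \cdots + b_r \neq 0$. Then $|\mathcal{F}| \leq r \, p^{\left(1 - \frac{(r-2)^2}{2 r^2 \ln p}\right) n}$. -/
/-!
Tao's slice-rank argument. Over `ZMod p`, the polynomial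
`P(x₁, …, x_r) = ∏ₜ (1 - (∑ᵢ x_{i,t}) ^ (p - 1))` is the indicator of `x₁ + ⋯ + x_r = 0`;
since `p ∣ r` and by the hypothesis on `F`, on `F^r` it is the diagonal tensor. `P` has degree
at most `(p - 1) n`, so every monomial has degree at most `(p - 1) n / r` in one of the blocks
`xᵢ`; grouping the monomials by such a block writes `P` as a sum of `r · |B|` slices, where `B`
is the set of exponent vectors in `{0, …, p - 1}ⁿ` of total degree at most `(p - 1) n / r`.
A diagonal tensor with nonzero diagonal has slice rank equal to its size, so `|F| ≤ r · |B|`,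
and a Chernoff bound with Hoeffding's lemma for `n` independent uniform variables on
`{0, …, p - 1}` gives `|B| ≤ pⁿ exp (-n (r - 2)² / (2 r²))`.
-/

open Finset Function

section DiagonalTensor

variable {R : Type*} [CommSemiring R] {V : Type*} [Fintype V] [DecidableEq V]

def diagTensor {k : ℕ} (c : V → R) (x : Fin k → V) : R :=
  ∑ a, if ∀ i, x i = a then c a else 0

theorem diagTensor_eq_ite {k : ℕ} (c : V → R) (x : Fin k → V) (i₀ : Fin k) :
    diagTensor c x = if ∀ i, x i = x i₀ then c (x i₀) else 0 := by
  have hall : ∀ a, (∀ i, x i = a) ↔ (∀ i, x i = x i₀) ∧ x i₀ = a := fun a =>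
    ⟨fun h => ⟨fun i => (h i).trans (h i₀).symm, h i₀⟩, fun ⟨h, ha⟩ i => (h i).trans ha⟩
  rw [diagTensor, sum_congr rfl fun a _ => if_congr (hall a) rfl rfl]
  simp only [ite_and, sum_ite_irrel, sum_ite_eq, mem_univ, if_true, sum_const_zero]

theorem sum_mul_diagTensor_snoc {k : ℕ} (c h : V → R) (x : Fin k → V) :
    ∑ v, h v * diagTensor c (Fin.snoc x v : Fin (k + 1) → V) = diagTensor (h * c) x := by
  simp only [diagTensor, Fin.forall_fin_succ', Fin.snoc_castSucc, Fin.snoc_last,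
    and_comm (b := _ = _), ite_and, sum_ite_eq, mem_univ, if_true]
  simp [mul_ite]

theorem diagTensor_mul_eq_sum_slices {k : ℕ} (c h : V → R) {J : Fin (k + 1) → Type*}
    [∀ i, Fintype (J i)] (f : ∀ i, J i → V → R) (g : ∀ i, J i → (Fin (k + 1) → V) → R)
    (hg : ∀ i j x v, g i j (update x i v) = g i j x)
    (hT : ∀ x, diagTensor c x = ∑ i, ∑ j, f i j (x i) * g i j x)
    (hh : ∀ j, ∑ v, h v * f (Fin.last k) j v = 0) (x : Fin k → V) :
    diagTensor (h * c) x =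
      ∑ i : Fin k, ∑ j, f i.castSucc j (x i) * ∑ v, h v * g i.castSucc j (Fin.snoc x v) := by
  have hlast : ∑ v, h v * ∑ j, f (Fin.last k) j v * g (Fin.last k) j (Fin.snoc x v) = 0 := by
    rcases isEmpty_or_nonempty V with hV | ⟨⟨w⟩⟩
    · simp
    have hw : ∀ v j, g (Fin.last k) j (Fin.snoc x v) = g (Fin.last k) j (Fin.snoc x w) :=
      fun v j => by
        rw [← Fin.update_snoc_last (α := fun _ => V) (p := x) (x := w) (z := v), hg]
    simp_rw [hw, mul_sum, ← mul_assoc]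
    rw [sum_comm]
    simp [← sum_mul, hh]
  rw [← sum_mul_diagTensor_snoc]
  simp_rw [hT, Fin.sum_univ_castSucc, Fin.snoc_castSucc, Fin.snoc_last, mul_add, sum_add_distrib,
    hlast, add_zero, mul_sum]
  rw [sum_comm]
  refine sum_congr rfl fun i _ => ?_
  rw [sum_comm]
  exact sum_congr rfl fun j _ => sum_congr rfl fun v _ => by ring

end DiagonalTensor

section SliceRank

variable {K : Type*} [Field K] [DecidableEq K]

section Support

variable {ι : Type*} [Fintype ι]

theorem Submodule.exists_card_support_lt (W : Submodule K (ι → K)) {h : ι → K} (hh : h ∈ W)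
    (hlt : #{i | h i ≠ 0} < Module.finrank K W) :
    ∃ h' ∈ W, #{i | h i ≠ 0} < #{i | h' i ≠ 0} := by
  set s : Finset ι := {i | h i ≠ 0}
  let restrict : W →ₗ[K] s → K := (LinearMap.funLeft K K ((↑) : s → ι)).comp W.subtype
  obtain ⟨g, hg, hg0⟩ := Submodule.exists_mem_ne_zero_of_ne_bot
    (LinearMap.ker_ne_bot_of_finrank_lt (f := restrict) (by simpa using hlt))
  have hgs : ∀ i ∈ s, (g : ι → K) i = 0 := fun i hi => congrFun hg ⟨i, hi⟩
  obtain ⟨j, hj⟩ : ∃ j, (g : ι → K) j ≠ 0 := by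
    by_contra! H
    exact hg0 (Subtype.ext (funext H))
  have hjs : j ∉ s := fun hjs => hj (hgs j hjs)
  refine ⟨h + g, W.add_mem hh g.2, card_lt_card ((ssubset_iff_of_subset ?_).2 ⟨j, ?_, hjs⟩)⟩
  · intro i hi
    simp_all [s]
  · simp_all [s]

theorem Submodule.exists_finrank_le_card_support (W : Submodule K (ι → K)) :
    ∃ h ∈ W, Module.finrank K W ≤ #{i | h i ≠ 0} := by
  suffices ∀ m ≤ Module.finrank K W, ∃ h ∈ W, m ≤ #{i | h i ≠ 0} from this _ le_rfl
  intro m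
  induction m with
  | zero => exact fun _ => ⟨0, W.zero_mem, Nat.zero_le _⟩
  | succ m ih =>
    intro hm
    obtain ⟨h, hh, hmh⟩ := ih (by omega)
    rcases hmh.lt_or_eq with hlt | heq
    · exact ⟨h, hh, hlt⟩
    · obtain ⟨h', hh', hlt⟩ := W.exists_card_support_lt hh (by omega)
      exact ⟨h', hh', by omega⟩

theorem exists_orthogonal_with_large_support (c : ι → K) {J : Type*} [Fintype J]
    (φ : J → ι → K) :
    ∃ h : ι → K, (∀ j, ∑ i, h i * φ j i = 0) ∧ (∀ i, c i = 0 → h i = 0) ∧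
      #{i | c i ≠ 0} ≤ #{i | h i ≠ 0} + Fintype.card J := by
  let ψ : (ι → K) →ₗ[K] (J → K) × ({i // c i = 0} → K) :=
    LinearMap.prod
      { toFun := fun h j => ∑ i, h i * φ j i
        map_add' := fun _ _ => funext fun _ => by simp [add_mul, sum_add_distrib]
        map_smul' := fun _ _ => funext fun _ => by simp [mul_sum, mul_assoc] }
      (LinearMap.funLeft K K Subtype.val)
  obtain ⟨h, hker, hcard⟩ := (LinearMap.ker ψ).exists_finrank_le_card_support
  have hψ : ψ h = 0 := hker
  refine ⟨h, fun j => congrFun (congrArg Prod.fst hψ) j,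
    fun i hi => congrFun (congrArg Prod.snd hψ) ⟨i, hi⟩, ?_⟩
  have hrank := LinearMap.finrank_range_add_finrank_ker ψ
  have hrange := (LinearMap.range ψ).finrank_le
  have hsplit := card_filter_add_card_filter_not (s := univ) (fun i => c i ≠ 0)
  simp only [Module.finrank_prod, Module.finrank_fintype_fun_eq_card, Fintype.card_subtype,
    not_not, card_univ] at hrank hrange hsplit
  omega

end Support

variable {V : Type*} [Fintype V] [DecidableEq V]

theorem card_support_le_of_diagTensor_eq_sum_slices_two (c : V → K) {J : Fin 2 → Type*}
    [∀ i, Fintype (J i)] (f : ∀ i, J i → V → K) (g : ∀ i, J i → (Fin 2 → V) → K)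
    (hg : ∀ i j x v, g i j (update x i v) = g i j x)
    (hT : ∀ x, diagTensor c x = ∑ i, ∑ j, f i j (x i) * g i j x) :
    #{v | c v ≠ 0} ≤ ∑ i, Fintype.card (J i) := by
  let U : Matrix V (J 0 ⊕ J 1) K := fun a =>
    Sum.elim (fun j => f 0 j a) (fun j => g 1 j ![a, a])
  let W : Matrix (J 0 ⊕ J 1) V K := fun s b =>
    Sum.elim (fun j => g 0 j ![b, b]) (fun j => f 1 j b) s
  have hUW : Matrix.diagonal c = U * W := by
    ext a b
    have h0 : ∀ j, g 0 j ![a, b] = g 0 j ![b, b] := fun j => by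
      rw [← hg 0 j ![b, b] a]
      congr 1
      ext i
      fin_cases i <;> rfl
    have h1 : ∀ j, g 1 j ![a, b] = g 1 j ![a, a] := fun j => by
      rw [← hg 1 j ![a, a] b]
      congr 1
      ext i
      fin_cases i <;> rfl
    have hab := hT ![a, b]
    rw [diagTensor_eq_ite c _ 0, Fin.sum_univ_two] at hab
    simp only [Fin.forall_fin_two, Matrix.cons_val_zero, Matrix.cons_val_one, h0, h1, true_and,
      eq_comm (a := b)] at hab
    rw [Matrix.diagonal_apply, hab, Matrix.mul_apply, Fintype.sum_sum_type]
    simp only [U, W, Sum.elim_inl, Sum.elim_inr, mul_comm (f 1 _ _)]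
  calc #{v | c v ≠ 0} = (Matrix.diagonal c).rank := by
        rw [Matrix.rank_diagonal, Fintype.card_subtype]
    _ ≤ Fintype.card (J 0 ⊕ J 1) :=
        hUW ▸ (Matrix.rank_mul_le_left U W).trans (Matrix.rank_le_card_width U)
    _ = ∑ i, Fintype.card (J i) := by simp [Fin.sum_univ_two]

theorem card_support_le_of_diagTensor_eq_sum_slices {k : ℕ} (hk : 2 ≤ k) (c : V → K)
    {J : Fin k → Type*} [∀ i, Fintype (J i)] (f : ∀ i, J i → V → K)
    (g : ∀ i, J i → (Fin k → V) → K) (hg : ∀ i j x v, g i j (update x i v) = g i j x)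
    (hT : ∀ x, diagTensor c x = ∑ i, ∑ j, f i j (x i) * g i j x) :
    #{v | c v ≠ 0} ≤ ∑ i, Fintype.card (J i) := by
  induction k, hk using Nat.le_induction generalizing c with
  | base => exact card_support_le_of_diagTensor_eq_sum_slices_two c f g hg hT
  | succ k hk ih =>
    -- Contracting the last coordinate against `h ⟂ f (last k)` kills the last slices and leaves
    -- a `k`-tensor with diagonal `h * c`, whose support is at least `|supp c| - |J (last k)|`.
    obtain ⟨h, hh, hsupp, hcard⟩ := exists_orthogonal_with_large_support c (f (Fin.last k))
    have hrest := ih (h * c) (fun i => f i.castSucc)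
      (fun i j x => ∑ v, h v * g i.castSucc j (Fin.snoc x v))
      (fun i j x w => by simp only [Fin.snoc_update, hg])
      (diagTensor_mul_eq_sum_slices c h f g hg hT hh)
    have hsupp' : #{v | (h * c) v ≠ 0} = #{v | h v ≠ 0} := by
      congr 1
      ext v
      by_cases hv : c v = 0 <;> simp [hv, hsupp]
    rw [Fin.sum_univ_castSucc]
    omega

end SliceRank

namespace MvPolynomial

variable {R : Type*} [CommSemiring R] {κ ι : Type*} [Fintype κ] [DecidableEq κ] [Fintype ι]

theorem exists_eval_eq_sum_slices (P : MvPolynomial (κ × ι) R)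
    (B : Finset (ι → ℕ)) (hP : ∀ m ∈ P.support, ∃ i, (fun t => m (i, t)) ∈ B) :
    ∃ g : κ → (ι → ℕ) → (κ → ι → R) → R, (∀ i b x v, g i b (update x i v) = g i b x) ∧
      ∀ x, eval (fun q => x q.1 q.2) P = ∑ i, ∑ b ∈ B, (∏ t, x i t ^ b t) * g i b x := by
  rcases isEmpty_or_nonempty κ with hκ | hκ
  · have hP0 : P = 0 := support_eq_empty.1 <| eq_empty_of_forall_notMem fun m hm =>
      (hP m hm).elim fun i _ => hκ.elim i
    exact ⟨0, fun _ _ _ _ => rfl, fun x => by simp [hP0]⟩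
  choose! sel hsel using hP
  refine ⟨fun i b x => ∑ m ∈ P.support with sel m = i ∧ (fun t => m (i, t)) = b,
      coeff m P * ∏ i' ∈ univ.erase i, ∏ t, x i' t ^ m (i', t), ?_, ?_⟩
  · intro i b x v
    refine sum_congr rfl fun m _ => ?_
    congr 1
    exact prod_congr rfl fun i' hi' => by rw [update_of_ne (ne_of_mem_erase hi')]
  · intro x
    rw [eval_eq', ← sum_fiberwise_of_maps_to (g := sel) (t := univ) fun _ _ => mem_univ _]
    refine sum_congr rfl fun i _ => ?_
    rw [← sum_fiberwise_of_maps_to (g := fun m t => m (i, t)) (t := B)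
      fun m hm => (mem_filter.1 hm).2 ▸ hsel m (mem_filter.1 hm).1]
    refine sum_congr rfl fun b _ => ?_
    rw [filter_filter, mul_sum]
    refine sum_congr rfl fun m hm => ?_
    obtain ⟨-, rfl, rfl⟩ := mem_filter.1 hm
    rw [Fintype.prod_prod_type, ← mul_prod_erase univ _ (mem_univ (sel m))]
    ring

end MvPolynomial

def lowExponents (p r n : ℕ) : Finset (Fin n → ℕ) :=
  {b ∈ Fintype.piFinset fun _ => range p | r * ∑ t, b t ≤ (p - 1) * n}

section ZeroSumPolynomial

open MvPolynomial

variable (p : ℕ) [Fact p.Prime] (r n : ℕ)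

noncomputable def zeroSumPoly : MvPolynomial (Fin r × Fin n) (ZMod p) :=
  ∏ t, (1 - (∑ i, X (i, t)) ^ (p - 1))

variable {p r n}

theorem ZMod.one_sub_pow_sub_one (a : ZMod p) : 1 - a ^ (p - 1) = if a = 0 then 1 else 0 := by
  split_ifs with ha
  · rw [ha, zero_pow (Nat.sub_ne_zero_of_lt (Fact.out : p.Prime).one_lt), sub_zero]
  · rw [ZMod.pow_card_sub_one_eq_one ha, sub_self]

theorem eval_zeroSumPoly (b : Fin r → Fin n → ZMod p) :
    eval (fun q => b q.1 q.2) (zeroSumPoly p r n) = if ∑ i, b i = 0 then 1 else 0 := by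
  simp only [zeroSumPoly, map_prod, map_sub, map_one, map_pow, map_sum, eval_X,
    ZMod.one_sub_pow_sub_one, Fintype.prod_boole, funext_iff, Finset.sum_apply, Pi.zero_apply]
  congr

theorem totalDegree_zeroSumPoly_le : (zeroSumPoly p r n).totalDegree ≤ (p - 1) * n := by
  have hsum : ∀ t, (∑ i, X (i, t) : MvPolynomial (Fin r × Fin n) (ZMod p)).totalDegree ≤ 1 :=
    fun t => (totalDegree_finsetSum _ _).trans (Finset.sup_le fun i _ => (totalDegree_X _).le)
  calc (zeroSumPoly p r n).totalDegree
      ≤ ∑ t, (1 - (∑ i, X (i, t)) ^ (p - 1) :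
          MvPolynomial (Fin r × Fin n) (ZMod p)).totalDegree :=
        totalDegree_finsetProd _ _
    _ ≤ ∑ _t : Fin n, (p - 1) := sum_le_sum fun t _ => (totalDegree_sub _ _).trans <|
        max_le (by simp) ((totalDegree_pow _ _).trans
          (by simpa using Nat.mul_le_mul_left (p - 1) (hsum t)))
    _ = (p - 1) * n := by simp [mul_comm]

theorem degreeOf_zeroSumPoly_le (q : Fin r × Fin n) :
    (zeroSumPoly p r n).degreeOf q ≤ p - 1 := by
  have hfactor : ∀ t, (1 - (∑ i, X (i, t)) ^ (p - 1) :
      MvPolynomial (Fin r × Fin n) (ZMod p)).degreeOf q ≤ if q.2 = t then p - 1 else 0 := by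
    intro t
    have hsum : (∑ i, X (i, t) : MvPolynomial (Fin r × Fin n) (ZMod p)).degreeOf q ≤
        if q.2 = t then 1 else 0 := by
      refine (degreeOf_sum_le _ _ _).trans (Finset.sup_le fun i _ => ?_)
      rw [degreeOf_X]
      split_ifs <;> simp_all
    refine (degreeOf_sub_le _ _ _).trans (max_le (by simp) ((degreeOf_pow_le _ _ _).trans ?_))
    split_ifs at hsum ⊢ <;> simpa using Nat.mul_le_mul_left (p - 1) hsum
  calc (zeroSumPoly p r n).degreeOf q
      ≤ ∑ t, (1 - (∑ i, X (i, t)) ^ (p - 1) :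
          MvPolynomial (Fin r × Fin n) (ZMod p)).degreeOf q :=
        degreeOf_prod_le _ _ _
    _ ≤ ∑ t, if q.2 = t then p - 1 else 0 := sum_le_sum fun t _ => hfactor t
    _ = p - 1 := by simp

theorem exists_block_mem_lowExponents (hr : 0 < r) {m : Fin r × Fin n →₀ ℕ}
    (hm : m ∈ (zeroSumPoly p r n).support) : ∃ i, (fun t => m (i, t)) ∈ lowExponents p r n := by
  have hdeg : ∑ i, ∑ t, m (i, t) ≤ (p - 1) * n := by
    rw [← Fintype.sum_prod_type', ← Finsupp.sum_fintype m (fun _ e => e) fun _ => rfl]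
    exact (le_totalDegree hm).trans totalDegree_zeroSumPoly_le
  obtain ⟨i, -, hi⟩ := exists_le_of_sum_le (s := univ) (f := fun i => r * ∑ t, m (i, t))
    (g := fun _ => (p - 1) * n) ⟨⟨0, hr⟩, mem_univ _⟩
    (by simpa [← mul_sum] using Nat.mul_le_mul_left r hdeg)
  refine ⟨i, mem_filter.2 ⟨Fintype.mem_piFinset.2 fun t => mem_range.2 ?_, hi⟩⟩
  exact ((monomial_le_degreeOf _ hm).trans (degreeOf_zeroSumPoly_le _)).trans_lt
    (Nat.sub_lt (Fact.out : p.Prime).pos one_pos)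

theorem card_le_mul_card_lowExponents (hr : 2 ≤ r) (hpr : p ∣ r) (F : Finset (Fin n → ZMod p))
    (hF : ∀ b : Fin r → Fin n → ZMod p, (∀ i, b i ∈ F) → ∑ i, b i = 0 → ∀ i j, b i = b j) :
    #F ≤ r * #(lowExponents p r n) := by
  obtain ⟨g, hg, hP⟩ := (zeroSumPoly p r n).exists_eval_eq_sum_slices (lowExponents p r n)
    fun m hm => exists_block_mem_lowExponents (by omega) hm
  have hdiag (x : Fin r → F) : diagTensor (fun _ => (1 : ZMod p)) x =
      ∑ i, ∑ b : lowExponents p r n,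
        (∏ t, (x i : Fin n → ZMod p) t ^ (b : Fin n → ℕ) t) * g i b (fun i => x i) := by
    rw [sum_congr rfl fun i _ => sum_coe_sort (lowExponents p r n)
      fun b => (∏ t, (x i : Fin n → ZMod p) t ^ b t) * g i b (fun i => x i),
      diagTensor_eq_ite _ x ⟨0, by omega⟩, ← hP,
      eval_zeroSumPoly (fun i => (x i : Fin n → ZMod p))]
    refine if_congr ⟨fun hx => ?_, fun hsum i => Subtype.ext (hF _ (fun i => (x i).2) hsum _ _)⟩
      rfl rfl
    rw [sum_congr rfl fun i _ => congrArg Subtype.val (hx i), sum_const, card_univ,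
      Fintype.card_fin, ← Nat.cast_smul_eq_nsmul (ZMod p), (ZMod.natCast_eq_zero_iff r p).2 hpr,
      zero_smul]
  simpa using card_support_le_of_diagTensor_eq_sum_slices hr (fun _ : F => (1 : ZMod p))
    (J := fun _ => lowExponents p r n)
    (fun _ b v => ∏ t, (v : Fin n → ZMod p) t ^ (b : Fin n → ℕ) t)
    (fun i b x => g i b (fun i => x i))
    (fun i b x v => by rw [← comp_def Subtype.val, comp_update, hg]; rfl) hdiag

end ZeroSumPolynomial

section Counting

open Real

theorem sum_range_exp_mul_le (m : ℕ) (θ : ℝ) :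
    ∑ v ∈ range m, exp (θ * v) ≤ m * exp (θ * (m - 1) / 2 + θ ^ 2 * (m - 1) ^ 2 / 8) := by
  set μ : ℝ := (m - 1) / 2 with hμ
  have hreflect : ∑ v ∈ range m, exp (θ * (v - μ)) = ∑ v ∈ range m, exp (-(θ * (v - μ))) := by
    rw [← sum_range_reflect]
    refine sum_congr rfl fun v hv => ?_
    rw [mem_range] at hv
    rw [Nat.sub_sub, Nat.cast_sub (by omega), Nat.cast_add, Nat.cast_one, hμ]
    ring_nf
  have hcosh : ∑ v ∈ range m, exp (θ * (v - μ)) = ∑ v ∈ range m, cosh (θ * (v - μ)) := by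
    simp_rw [cosh_eq]
    rw [← sum_div, sum_add_distrib, ← hreflect]
    ring
  have hbound (v : ℕ) (hv : v ∈ range m) :
      cosh (θ * (v - μ)) ≤ exp (θ ^ 2 * (m - 1) ^ 2 / 8) := by
    have hvm : (v : ℝ) + 1 ≤ m := by exact_mod_cast mem_range.1 hv
    have hv0 : (0 : ℝ) ≤ v := v.cast_nonneg
    refine (cosh_le_exp_half_sq _).trans (exp_le_exp.2 ?_)
    have hdev : (v - μ) ^ 2 ≤ μ ^ 2 := by nlinarith
    calc (θ * (v - μ)) ^ 2 / 2 = θ ^ 2 * (v - μ) ^ 2 / 2 := by ring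
      _ ≤ θ ^ 2 * μ ^ 2 / 2 := by gcongr
      _ = θ ^ 2 * (m - 1) ^ 2 / 8 := by rw [hμ]; ring
  calc ∑ v ∈ range m, exp (θ * v) = exp (θ * μ) * ∑ v ∈ range m, exp (θ * (v - μ)) := by
        rw [mul_sum]
        exact sum_congr rfl fun v _ => by rw [← exp_add]; ring_nf
    _ = exp (θ * μ) * ∑ v ∈ range m, cosh (θ * (v - μ)) := by rw [hcosh]
    _ ≤ exp (θ * μ) * ∑ _v ∈ range m, exp (θ ^ 2 * (m - 1) ^ 2 / 8) := by
        gcongr with v hv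
        exact hbound v hv
    _ = m * exp (θ * (m - 1) / 2 + θ ^ 2 * (m - 1) ^ 2 / 8) := by
        rw [sum_const, card_range, nsmul_eq_mul, exp_add, hμ]
        ring_nf

theorem card_filter_sum_le_le_exp (s : Finset ℕ) (n : ℕ) (a : ℝ) {θ : ℝ} (hθ : 0 ≤ θ) :
    (#{b ∈ Fintype.piFinset fun _ : Fin n => s | ∑ t, (b t : ℝ) ≤ a} : ℝ) ≤
      exp (θ * a) * (∑ v ∈ s, exp (-(θ * v))) ^ n := by
  set S := Fintype.piFinset fun _ : Fin n => s with hS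
  calc (#{b ∈ S | ∑ t, (b t : ℝ) ≤ a} : ℝ)
      ≤ ∑ b ∈ {b ∈ S | ∑ t, (b t : ℝ) ≤ a}, exp (θ * (a - ∑ t, (b t : ℝ))) := by
        rw [card_eq_sum_ones, Nat.cast_sum, Nat.cast_one]
        exact sum_le_sum fun b hb =>
          one_le_exp (mul_nonneg hθ (sub_nonneg.2 (mem_filter.1 hb).2))
    _ ≤ ∑ b ∈ S, exp (θ * (a - ∑ t, (b t : ℝ))) :=
        sum_le_sum_of_subset_of_nonneg (filter_subset _ _) fun _ _ _ => (exp_pos _).le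
    _ = ∑ b ∈ S, exp (θ * a) * ∏ t, exp (-(θ * b t)) := by
        refine sum_congr rfl fun b _ => ?_
        rw [← exp_sum, ← exp_add, mul_sub, mul_sum, sub_eq_add_neg, sum_neg_distrib]
    _ = exp (θ * a) * (∑ v ∈ s, exp (-(θ * v))) ^ n := by
        rw [← mul_sum, hS, sum_prod_piFinset s fun _ v => exp (-(θ * v)), prod_const,
          card_univ, Fintype.card_fin]

theorem card_lowExponents_le {p r : ℕ} (hp : 2 ≤ p) (hr : 2 ≤ r) (n : ℕ) :
    (#(lowExponents p r n) : ℝ) ≤ p ^ n * exp (-(n * ((r : ℝ) - 2) ^ 2 / (2 * r ^ 2))) := by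
  have hp' : (2 : ℝ) ≤ p := by exact_mod_cast hp
  have hr' : (2 : ℝ) ≤ r := by exact_mod_cast hr
  -- `θ` minimises `θ (p - 1) (1 / r - 1 / 2) + θ² (p - 1)² / 8`, the Chernoff exponent.
  set θ : ℝ := 2 * (r - 2) / (r * (p - 1)) with hθ
  have hθ0 : 0 ≤ θ := div_nonneg (by linarith) (mul_nonneg (by linarith) (by linarith))
  have hsub : lowExponents p r n ⊆
      {b ∈ Fintype.piFinset fun _ : Fin n => range p | ∑ t, (b t : ℝ) ≤ (p - 1) * n / r} := by
    intro b hb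
    rw [lowExponents, mem_filter] at hb
    refine mem_filter.2 ⟨hb.1, ?_⟩
    rw [le_div_iff₀ (by linarith), mul_comm, ← Nat.cast_one, ← Nat.cast_sub (by omega)]
    exact_mod_cast hb.2
  calc (#(lowExponents p r n) : ℝ)
      ≤ #{b ∈ Fintype.piFinset fun _ : Fin n => range p | ∑ t, (b t : ℝ) ≤ (p - 1) * n / r} := by
        exact_mod_cast card_le_card hsub
    _ ≤ exp (θ * ((p - 1) * n / r)) * (∑ v ∈ range p, exp (-(θ * v))) ^ n :=
        card_filter_sum_le_le_exp _ _ _ hθ0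
    _ ≤ exp (θ * ((p - 1) * n / r)) *
          (p * exp (-θ * (p - 1) / 2 + θ ^ 2 * (p - 1) ^ 2 / 8)) ^ n := by
        gcongr
        simpa [neg_mul] using sum_range_exp_mul_le p (-θ)
    _ = p ^ n * exp (-(n * ((r : ℝ) - 2) ^ 2 / (2 * r ^ 2))) := by
        have hp1 : (p : ℝ) - 1 ≠ 0 := by linarith
        have hexp : θ * ((p - 1) * n / r) + n * (-θ * (p - 1) / 2 + θ ^ 2 * (p - 1) ^ 2 / 8) =
            -(n * ((r : ℝ) - 2) ^ 2 / (2 * r ^ 2)) := by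
          rw [hθ]
          field_simp
          ring
        rw [mul_pow, ← exp_nat_mul, mul_left_comm, ← exp_add, hexp]

end Counting

theorem zero_sum_free_bound (p : ℕ) (hp : p.Prime) (r : ℕ) (hr : 2 ≤ r) (hpr : p ∣ r)
    (n : ℕ) (F : Finset (Fin n → ZMod p))
    (hF : ∀ b : Fin r → (Fin n → ZMod p), (∀ i, b i ∈ F) →
      (∃ i j : Fin r, i < j ∧ b i ≠ b j) → ∑ i, b i ≠ 0) :
    (F.card : ℝ) ≤
      r * (p : ℝ) ^ ((1 - ((r : ℝ) - 2) ^ 2 / (2 * (r : ℝ) ^ 2 * Real.log p)) * n) := by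
  have := Fact.mk hp
  have hF' (b : Fin r → Fin n → ZMod p) (hb : ∀ i, b i ∈ F) (hsum : ∑ i, b i = 0) (i j : Fin r) :
      b i = b j := by
    by_contra hne
    rcases lt_or_gt_of_ne (ne_of_apply_ne b hne) with hij | hji
    · exact hF b hb ⟨i, j, hij, hne⟩ hsum
    · exact hF b hb ⟨j, i, hji, Ne.symm hne⟩ hsum
  have hp0 : (0 : ℝ) < p := by exact_mod_cast hp.pos
  have hlog : Real.log p ≠ 0 := (Real.log_pos (by exact_mod_cast hp.one_lt)).ne'
  calc (F.card : ℝ) ≤ r * #(lowExponents p r n) := by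
        exact_mod_cast card_le_mul_card_lowExponents hr hpr F hF'
    _ ≤ r * (p ^ n * Real.exp (-(n * ((r : ℝ) - 2) ^ 2 / (2 * r ^ 2)))) := by
        gcongr
        exact card_lowExponents_le hp.two_le hr n
    _ = r * (p : ℝ) ^ ((1 - ((r : ℝ) - 2) ^ 2 / (2 * (r : ℝ) ^ 2 * Real.log p)) * n) := by
        rw [← Real.rpow_natCast, Real.rpow_def_of_pos hp0, Real.rpow_def_of_pos hp0,
          ← Real.exp_add]
        congr 3
        field_simp
        ring
end
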